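/- Let A ⊆ M and let μ ∈ 𝔐_x(M), ν ∈ 𝔐_y(M), η ∈ 𝔐_z(M) be global Keisler measures. If μ ≥_{E,A} ν and ν ≥_{E,A} η, then μ ≥_{E,A} η. -/

import Mathlib

open FirstOrder

/-- A Keisler measure over the parameter set `A`, in the variables indexed by `α`:
a finitely additive probability measure on the Boolean algebra of `A`-definable
subsets of `M^α` (i.e. on `L_α(A)`).  The function `toFun` is defined on all sets,
but only its values on `A`-definable sets are constrained (and relevant). -/
structure KeislerMeasure (L : FirstOrder.Language) (M : Type*) [L.Structure M]
    (A : Set M) (α : Type*) where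
  toFun : Set (α → M) → ℝ
  measure_univ : toFun Set.univ = 1
  nonneg' : ∀ s : Set (α → M), A.Definable L s → 0 ≤ toFun s
  compl' : ∀ s : Set (α → M), A.Definable L s → toFun sᶜ = 1 - toFun s
  union_inter' : ∀ s t : Set (α → M), A.Definable L s → A.Definable L t →
    toFun (s ∪ t) = toFun s + toFun t - toFun (s ∩ t)

/-- Pull back a set of variable assignments along a variable reindexing map:
for `S ⊆ M^α` and `f : α → β`, `cyl f S ⊆ M^β` is the corresponding cylinder.
E.g. `cyl Sum.inl X = X × M^β` inside `M^(α ⊕ β)`. -/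
def cyl {M : Type*} {α β : Type*} (f : α → β) (S : Set (α → M)) : Set (β → M) :=
  {g : β → M | (fun a => g (f a)) ∈ S}

/-- The product `X × Y` of a set in variables `α` and a set in variables `β`,
viewed inside the variables `α ⊕ β`. -/
def prodSet {M : Type*} {α β : Type*} (X : Set (α → M)) (Y : Set (β → M)) :
    Set (α ⊕ β → M) :=
  cyl Sum.inl X ∩ cyl Sum.inr Y

/-- The extension space `E(λ, μ)`: all global Keisler measures `ω` in the
variables `α ⊕ β` whose restriction to `A`-definable sets is `λ` and whose
marginal `π_α(ω)` is `μ`. -/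
def extSpace (L : FirstOrder.Language) {M : Type*} [L.Structure M] (A : Set M)
    {α β : Type*} (lam : KeislerMeasure L M A (α ⊕ β))
    (mu : KeislerMeasure L M (Set.univ : Set M) α) :
    Set (KeislerMeasure L M (Set.univ : Set M) (α ⊕ β)) :=
  {om | (∀ s : Set (α ⊕ β → M), A.Definable L s → om.toFun s = lam.toFun s) ∧
    (∀ X : Set (α → M), (Set.univ : Set M).Definable L X →
      om.toFun (cyl Sum.inl X) = mu.toFun X)}

/-- `μ` extension dominates `ν` over `A` (written `μ ≥_{E,A} ν`): there is
`λ ∈ 𝔐_{αβ}(A)` with `π_α(λ) = μ|_A` such that `π_β(ω) = ν` for every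
`ω ∈ E(λ, μ)`. -/
def ExtDomOver (L : FirstOrder.Language) {M : Type*} [L.Structure M] (A : Set M)
    {α β : Type*} (mu : KeislerMeasure L M (Set.univ : Set M) α)
    (nu : KeislerMeasure L M (Set.univ : Set M) β) : Prop :=
  ∃ lam : KeislerMeasure L M A (α ⊕ β),
    (∀ X : Set (α → M), A.Definable L X →
      lam.toFun (cyl Sum.inl X) = mu.toFun X) ∧
    ∀ om ∈ extSpace L A lam mu, ∀ Y : Set (β → M),
      (Set.univ : Set M).Definable L Y → om.toFun (cyl Sum.inr Y) = nu.toFun Y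

/-!
The engine is an amalgamation principle for Keisler measures: if `m₁` and `m₂` live on variables
embedded into a common tuple `δ` by `j₁` and `j₂`, and `m₁ S ≤ m₂ R` whenever the cylinder of `S`
lies inside that of `R`, then some global measure on `δ` restricts to both. By Hahn–Banach with
the sublinear functional `f ↦ sup f` on bounded functions on `M^δ`, it suffices that the formal
integrals satisfy `∫ f dm₁ + ∫ g dm₂ ≤ sup (f ∘ j₁ + g ∘ j₂)`. Splitting `M^{ε₁}` and `M^{ε₂}`
into the atoms of the finitely many sets involved, this is first-order stochastic dominance of two
finite distributions on `ℝ`, which follows from the layer-cake formula.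

Let `λ₁` witness `μ ≥ ν` and `λ₂` witness `ν ≥ η`. Amalgamating `λ₁` with `μ` shows that
`E(λ₁, μ)` is nonempty, so `π_y λ₁ = ν|_A = π_y λ₂`, and then `λ₁`, `λ₂` amalgamate along `y` to
some `Ω₀` in the variables `xyz`. Its marginal `λ₃ := π_{xz} Ω₀` witnesses `μ ≥ η`: each
`ω ∈ E(λ₃, μ)` lifts to a global `Ω` over `Ω₀`; the `xy`-marginal of `Ω` lies in `E(λ₁, μ)`, so
its `y`-marginal is `ν`, so its `yz`-marginal lies in `E(λ₂, ν)`, and hence `π_z ω = η`.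
-/

open Set Finset

section LayerCake

theorem sum_filter_le_eq_sum_indicator {ι : Type*} (s : Finset ι) (p x : ι → ℝ) (r : ℝ) :
    ∑ i ∈ s with r ≤ x i, p i = ∑ i ∈ s, {r | r ≤ x i}.indicator (fun _ => p i) r := by
  simp [Finset.sum_filter, Set.indicator_apply]

theorem intervalIntegrable_indicator_setOf_le (c v a b : ℝ) :
    IntervalIntegrable ({r | r ≤ c}.indicator fun _ => v) MeasureTheory.volume a b :=
  ⟨intervalIntegrable_const.1.indicator measurableSet_Iic,
    intervalIntegrable_const.2.indicator measurableSet_Iic⟩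

theorem intervalIntegrable_sum_filter_le {ι : Type*} (s : Finset ι) (p x : ι → ℝ) (a b : ℝ) :
    IntervalIntegrable (fun r => ∑ i ∈ s with r ≤ x i, p i) MeasureTheory.volume a b := by
  simp_rw [sum_filter_le_eq_sum_indicator, ← Finset.sum_apply]
  exact IntervalIntegrable.sum s fun i _ => intervalIntegrable_indicator_setOf_le _ _ _ _

theorem sum_mul_eq_add_integral_sum_filter_le {ι : Type*} (s : Finset ι) (p x : ι → ℝ)
    {a b : ℝ} (hx : ∀ i ∈ s, x i ∈ Icc a b) :
    ∑ i ∈ s, p i * x i = a * ∑ i ∈ s, p i + ∫ r in a..b, ∑ i ∈ s with r ≤ x i, p i := by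
  simp_rw [sum_filter_le_eq_sum_indicator]
  rw [intervalIntegral.integral_finsetSum fun i _ => intervalIntegrable_indicator_setOf_le ..,
    Finset.mul_sum, ← Finset.sum_add_distrib]
  refine Finset.sum_congr rfl fun i hi => ?_
  rw [intervalIntegral.integral_indicator (hx i hi), intervalIntegral.integral_const, smul_eq_mul]
  ring

theorem sum_mul_le_sum_mul_of_forall_sum_filter_le {ι κ : Type*} (s : Finset ι) (t : Finset κ)
    (p x : ι → ℝ) (q y : κ → ℝ) (hsum : ∑ i ∈ s, p i = ∑ k ∈ t, q k)
    (htail : ∀ r, ∑ i ∈ s with r ≤ x i, p i ≤ ∑ k ∈ t with r ≤ y k, q k) :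
    ∑ i ∈ s, p i * x i ≤ ∑ k ∈ t, q k * y k := by
  obtain ⟨a, ha⟩ := (s.image x ∪ t.image y).bddBelow
  obtain ⟨b, hb⟩ := (s.image x ∪ t.image y).bddAbove
  have hIcc : ∀ v ∈ s.image x ∪ t.image y, v ∈ Icc a (max a b) :=
    fun v hv => ⟨ha hv, (hb hv).trans (le_max_right a b)⟩
  rw [sum_mul_eq_add_integral_sum_filter_le s p x
      fun i hi => hIcc _ (mem_union_left _ (mem_image_of_mem x hi)),
    sum_mul_eq_add_integral_sum_filter_le t q y
      fun k hk => hIcc _ (mem_union_right _ (mem_image_of_mem y hk)),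
    hsum]
  gcongr
  exact intervalIntegral.integral_mono_on (le_max_left a b) (intervalIntegrable_sum_filter_le ..)
    (intervalIntegrable_sum_filter_le ..) fun r _ => htail r

end LayerCake

section HahnBanach

theorem LinearMap.exists_extension_of_le_sublinear_comp {E F : Type*} [AddCommGroup E]
    [Module ℝ E] [AddCommGroup F] [Module ℝ F] (ev : F →ₗ[ℝ] E) (φ : F →ₗ[ℝ] ℝ) (N : E → ℝ)
    (N_hom : ∀ c : ℝ, 0 < c → ∀ x, N (c • x) = c * N x) (N_add : ∀ x y, N (x + y) ≤ N x + N y)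
    (hφ : ∀ z, φ z ≤ N (ev z)) :
    ∃ g : E →ₗ[ℝ] ℝ, (∀ z, g (ev z) = φ z) ∧ ∀ x, g x ≤ N x := by
  have N_zero : N 0 = 0 := by
    have h := N_hom 2 two_pos 0
    rw [smul_zero] at h
    linarith
  have hker : LinearMap.ker ev ≤ LinearMap.ker φ := fun z hz => by
    rw [LinearMap.mem_ker] at hz ⊢
    have h₁ := hφ z
    have h₂ := hφ (-z)
    rw [hz, N_zero] at h₁
    rw [map_neg, map_neg, hz, neg_zero, N_zero] at h₂
    linarith
  let ψ : LinearMap.range ev →ₗ[ℝ] ℝ :=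
    (LinearMap.ker ev).liftQ φ hker ∘ₗ ev.quotKerEquivRange.symm.toLinearMap
  have hψ : ∀ z, ψ ⟨ev z, LinearMap.mem_range_self ev z⟩ = φ z := fun z => by
    simp [ψ]
  obtain ⟨g, hgψ, hgN⟩ := exists_extension_of_le_sublinear ⟨LinearMap.range ev, ψ⟩ N N_hom N_add
    (by rintro ⟨_, z, rfl⟩; exact (hψ z).trans_le (hφ z))
  exact ⟨g, fun z => (hgψ ⟨ev z, LinearMap.mem_range_self ev z⟩).trans (hψ z), hgN⟩

def boundedFunctions (T : Type*) : Submodule ℝ (T → ℝ) where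
  carrier := {f | ∃ C, ∀ t, |f t| ≤ C}
  add_mem' := by
    rintro f g ⟨C, hC⟩ ⟨D, hD⟩
    exact ⟨C + D, fun t => (abs_add_le _ _).trans (add_le_add (hC t) (hD t))⟩
  zero_mem' := ⟨0, fun t => by simp⟩
  smul_mem' := by
    rintro c f ⟨C, hC⟩
    exact ⟨|c| * C, fun t => by
      simpa [abs_mul] using mul_le_mul_of_nonneg_left (hC t) (abs_nonneg c)⟩

theorem bddAbove_range_of_mem_boundedFunctions {T : Type*} {f : T → ℝ}
    (hf : f ∈ boundedFunctions T) : BddAbove (range f) := by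
  obtain ⟨C, hC⟩ := hf
  exact ⟨C, by rintro _ ⟨t, rfl⟩; exact (le_abs_self _).trans (hC t)⟩

theorem indicator_one_mem_boundedFunctions {T : Type*} (X : Set T) :
    X.indicator 1 ∈ boundedFunctions T :=
  ⟨1, fun t => by by_cases ht : t ∈ X <;> simp [ht]⟩

theorem exists_content_of_le_iSup {T F : Type*} [Nonempty T] [AddCommGroup F] [Module ℝ F]
    (ev : F →ₗ[ℝ] T → ℝ) (hev : ∀ z, ev z ∈ boundedFunctions T) (φ : F →ₗ[ℝ] ℝ)
    (hφ : ∀ z, φ z ≤ ⨆ t, ev z t) :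
    ∃ ω : Set T → ℝ, (∀ X, 0 ≤ ω X) ∧ (∀ X Y, ω (X ∪ Y) + ω (X ∩ Y) = ω X + ω Y) ∧
      ∀ z X, ev z = X.indicator 1 → ω X = φ z := by
  have hbdd (f : boundedFunctions T) := bddAbove_range_of_mem_boundedFunctions f.2
  obtain ⟨g, hgφ, hg⟩ := (ev.codRestrict _ hev).exists_extension_of_le_sublinear_comp φ
    (fun f => ⨆ t, (f : T → ℝ) t) (fun c hc f => (Real.mul_iSup_of_nonneg hc.le _).symm)
    (fun f f' => ciSup_le fun t => add_le_add (le_ciSup (hbdd f) t) (le_ciSup (hbdd f') t)) hφ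
  let indicator (X : Set T) : boundedFunctions T := ⟨_, indicator_one_mem_boundedFunctions X⟩
  refine ⟨fun X => g (indicator X), fun X => ?_, fun X Y => ?_, fun z X hz => ?_⟩
  · have h₁ := hg (-indicator X)
    have h₂ : ⨆ t, ((-indicator X : boundedFunctions T) : T → ℝ) t ≤ 0 :=
      ciSup_le fun t => by by_cases ht : t ∈ X <;> simp [indicator, ht]
    rw [map_neg] at h₁
    linarith
  · rw [← map_add, ← map_add]
    congr 1
    ext t
    exact Set.indicator_union_add_inter_apply _ _ _ _
  · rw [← hgφ]
    exact congrArg g (Subtype.ext hz.symm)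

end HahnBanach

section Definability

open FirstOrder.Language

variable {L : FirstOrder.Language} {M : Type*} [L.Structure M] {A : Set M}

theorem Set.Definable.cyl {ε δ : Type*} {S : Set (ε → M)} (h : A.Definable L S) (j : ε → δ) :
    A.Definable L (cyl j S) :=
  h.preimage_comp j

theorem Set.Definable.image_comp_sumInl_of_nonempty {α κ : Type*} [Nonempty (κ → M)]
    {s : Set (α ⊕ κ → M)} (h : A.Definable L s) :
    A.Definable L ((fun g : α ⊕ κ → M => g ∘ Sum.inl) '' s) := by
  classical
  obtain ⟨φ, rfl⟩ := h
  obtain ⟨u₀⟩ := ‹Nonempty (κ → M)›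
  -- Only the finitely many variables of `κ` free in `φ` are quantified; the others are filled in
  -- from `u₀`.
  let K : Finset κ := φ.freeVarFinset.preimage Sum.inr Sum.inr_injective.injOn
  let r : φ.freeVarFinset → α ⊕ K
    | ⟨Sum.inl a, _⟩ => Sum.inl a
    | ⟨Sum.inr k, hk⟩ => Sum.inr ⟨k, Finset.mem_preimage.2 hk⟩
  let ψ : L[[A]].Formula (α ⊕ K) := φ.restrictFreeVar r
  have hψ : ∀ (g : α ⊕ κ → M) (u : K → M), (∀ k : K, u k = g (Sum.inr k)) →
      (ψ.Realize (Sum.elim (g ∘ Sum.inl) u) ↔ φ.Realize g) := by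
    intro g u hu
    refine BoundedFormula.realize_restrictFreeVar g ?_
    rintro ⟨a | k, hk⟩
    · rfl
    · exact hu _
  convert (show A.Definable L (Set.ofPred ψ.Realize) from ⟨ψ, rfl⟩).exists_of_finite using 1
  ext v
  constructor
  · rintro ⟨g, hg, rfl⟩
    exact ⟨fun k => g (Sum.inr k), (hψ g _ fun _ => rfl).2 hg⟩
  · rintro ⟨u, hu⟩
    refine ⟨Sum.elim v fun k => if hk : k ∈ K then u ⟨k, hk⟩ else u₀ k, (hψ _ u ?_).1 hu, rfl⟩
    rintro ⟨k, hk⟩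
    simp [hk]

theorem Set.Definable.image_comp_embedding_of_nonempty {α β : Type*} [Nonempty (β → M)]
    {s : Set (β → M)} (h : A.Definable L s) (f : α ↪ β) :
    A.Definable L ((fun g : β → M => g ∘ f) '' s) := by
  classical
  obtain ⟨g₀⟩ := ‹Nonempty (β → M)›
  have : Nonempty (↥(range f)ᶜ → M) := ⟨fun i => g₀ i⟩
  let e : α ⊕ ↥(range f)ᶜ ≃ β := (Equiv.sumCongr (Equiv.ofInjective f f.injective)
    (Equiv.refl _)).trans (Equiv.Set.sumCompl (range f))
  convert (h.image_comp_equiv e).image_comp_sumInl_of_nonempty using 1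
  rw [Set.image_image]
  rfl

end Definability

namespace KeislerMeasure

variable {L : FirstOrder.Language} {M : Type*} [L.Structure M] {A : Set M} {ε δ : Type*}

theorem apply_empty (m : KeislerMeasure L M A ε) : m.toFun ∅ = 0 := by
  have h := m.compl' Set.univ Set.definable_univ
  rwa [Set.compl_univ, m.measure_univ, sub_self] at h

theorem nonempty (m : KeislerMeasure L M A ε) : Nonempty (ε → M) := by
  by_contra h
  have h₁ := m.measure_univ
  rw [Set.univ_eq_empty_iff.2 (not_nonempty_iff.1 h), m.apply_empty] at h₁
  exact zero_ne_one h₁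

theorem apply_union_of_disjoint (m : KeislerMeasure L M A ε) {s t : Set (ε → M)}
    (hs : A.Definable L s) (ht : A.Definable L t) (hst : Disjoint s t) :
    m.toFun (s ∪ t) = m.toFun s + m.toFun t := by
  rw [m.union_inter' s t hs ht, Set.disjoint_iff_inter_eq_empty.1 hst, m.apply_empty, sub_zero]

theorem mono (m : KeislerMeasure L M A ε) {s t : Set (ε → M)} (hs : A.Definable L s)
    (ht : A.Definable L t) (hst : s ⊆ t) : m.toFun s ≤ m.toFun t := by
  have h := m.apply_union_of_disjoint hs (ht.sdiff hs) Set.disjoint_sdiff_right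
  rw [Set.union_sdiff_cancel hst] at h
  linarith [m.nonneg' _ (ht.sdiff hs)]

theorem apply_preimage_finset {K : Type*} (m : KeislerMeasure L M A ε) {τ : (ε → M) → K}
    (hτ : ∀ k, A.Definable L (τ ⁻¹' {k})) (P : Finset K) :
    A.Definable L (τ ⁻¹' ↑P) ∧ m.toFun (τ ⁻¹' ↑P) = ∑ k ∈ P, m.toFun (τ ⁻¹' {k}) := by
  classical
  induction P using Finset.induction_on with
  | empty =>
    simp only [Finset.coe_empty, Set.preimage_empty, Finset.sum_empty]
    exact ⟨Set.definable_empty, m.apply_empty⟩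
  | insert k P hk ih =>
    rw [Finset.coe_insert, Set.insert_eq, Set.preimage_union, Finset.sum_insert hk, ← ih.2,
      m.apply_union_of_disjoint (hτ k) ih.1 (Set.disjoint_singleton_left.2 hk |>.preimage τ)]
    exact ⟨(hτ k).union ih.1, rfl⟩

def ofContent (ω : Set (ε → M) → ℝ) (h_univ : ω Set.univ = 1) (h_empty : ω ∅ = 0)
    (h_nonneg : ∀ s, 0 ≤ ω s) (h_add : ∀ s t, ω (s ∪ t) + ω (s ∩ t) = ω s + ω t) :
    KeislerMeasure L M A ε where
  toFun := ω
  measure_univ := h_univ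
  nonneg' s _ := h_nonneg s
  compl' s _ := by
    have h := h_add s sᶜ
    rw [Set.union_compl_self, Set.inter_compl_self, h_univ, h_empty] at h
    linarith
  union_inter' s t _ _ := by linarith [h_add s t]

def restrict {B : Set M} (m : KeislerMeasure L M B ε) (hAB : A ⊆ B) :
    KeislerMeasure L M A ε where
  toFun := m.toFun
  measure_univ := m.measure_univ
  nonneg' s hs := m.nonneg' s (hs.mono hAB)
  compl' s hs := m.compl' s (hs.mono hAB)
  union_inter' s t hs ht := m.union_inter' s t (hs.mono hAB) (ht.mono hAB)

def comap (m : KeislerMeasure L M A δ) (j : ε → δ) : KeislerMeasure L M A ε where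
  toFun s := m.toFun (cyl j s)
  measure_univ := m.measure_univ
  nonneg' _ hs := m.nonneg' _ (hs.cyl j)
  compl' _ hs := m.compl' _ (hs.cyl j)
  union_inter' _ _ hs ht := m.union_inter' _ _ (hs.cyl j) (ht.cyl j)

end KeislerMeasure

section IndicatorCombination

open FirstOrder.Language

variable {L : FirstOrder.Language} {M : Type*} [L.Structure M] {A : Set M} {ε : Type*}

noncomputable def indicatorCombination : (L.DefinableSet A ε →₀ ℝ) →ₗ[ℝ] (ε → M) → ℝ :=
  Finsupp.linearCombination ℝ fun S => (S : Set (ε → M)).indicator 1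

noncomputable def KeislerMeasure.integral (m : KeislerMeasure L M A ε) :
    (L.DefinableSet A ε →₀ ℝ) →ₗ[ℝ] ℝ :=
  Finsupp.linearCombination ℝ fun S => m.toFun S

/-- The fibres of `atomIndex x` are the atoms of the Boolean algebra generated by `x.support`. -/
noncomputable def atomIndex (x : L.DefinableSet A ε →₀ ℝ) (s : ε → M) :
    Finset (L.DefinableSet A ε) :=
  open Classical in {S ∈ x.support | s ∈ S}

variable (x : L.DefinableSet A ε →₀ ℝ)

theorem indicatorCombination_apply (s : ε → M) :
    indicatorCombination x s = ∑ S ∈ atomIndex x s, x S := by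
  classical
  simp [indicatorCombination, atomIndex, Finsupp.linearCombination_apply, Finsupp.sum,
    Finset.sum_filter, Set.indicator_apply]

theorem abs_indicatorCombination_le (s : ε → M) :
    |indicatorCombination x s| ≤ ∑ S ∈ x.support, |x S| := by
  classical
  rw [indicatorCombination_apply]
  exact (Finset.abs_sum_le_sum_abs _ _).trans
    (Finset.sum_le_sum_of_subset_of_nonneg (Finset.filter_subset _ _) fun _ _ _ => abs_nonneg _)

theorem indicatorCombination_single (S : L.DefinableSet A ε) :
    indicatorCombination (Finsupp.single S 1) = (S : Set (ε → M)).indicator 1 := by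
  rw [indicatorCombination, Finsupp.linearCombination_single, one_smul]

theorem KeislerMeasure.integral_single (m : KeislerMeasure L M A ε) (S : L.DefinableSet A ε) :
    m.integral (Finsupp.single S 1) = m.toFun S := by
  rw [KeislerMeasure.integral, Finsupp.linearCombination_single, one_smul]

theorem atomIndex_subset (s : ε → M) : atomIndex x s ⊆ x.support := by
  classical
  exact Finset.filter_subset _ _

theorem atomIndex_preimage_powerset_filter (p : Finset (L.DefinableSet A ε) → Prop)
    [DecidablePred p] :
    atomIndex x ⁻¹' ↑({k ∈ x.support.powerset | p k}) = {s | p (atomIndex x s)} := by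
  ext s
  simp [atomIndex_subset]

theorem definable_atomIndex_preimage_singleton (k : Finset (L.DefinableSet A ε)) :
    A.Definable L (atomIndex x ⁻¹' {k}) := by
  classical
  by_cases hk : k ⊆ x.support
  swap
  · convert Set.definable_empty using 1
    ext s
    simp only [Set.mem_preimage, Set.mem_singleton_iff, Set.mem_empty_iff_false, iff_false]
    exact fun h => hk (h ▸ atomIndex_subset x s)
  have : atomIndex x ⁻¹' {k} = ⋂ S ∈ x.support, {s | s ∈ S ↔ S ∈ k} := by
    ext s
    simp only [Set.mem_preimage, Set.mem_singleton_iff, Finset.ext_iff, atomIndex,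
      Finset.mem_filter, Set.mem_iInter, Set.mem_ofPred_eq]
    exact ⟨fun h S hS => (and_iff_right hS).symm.trans (h S), fun h S =>
      ⟨fun ⟨hS, hs⟩ => (h S hS).1 hs, fun hSk => ⟨hk hSk, (h S (hk hSk)).2 hSk⟩⟩⟩
  rw [this]
  refine Set.definable_biInter_finset (fun S => ?_) _
  by_cases hS : S ∈ k
  · convert S.2 using 1
    ext s
    simp only [Set.mem_ofPred_eq, hS, iff_true]
    rfl
  · convert S.2.compl using 1
    ext s
    simp only [Set.mem_ofPred_eq, hS, iff_false, Set.mem_compl_iff]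
    rfl

variable (m : KeislerMeasure L M A ε)

theorem KeislerMeasure.apply_setOf_atomIndex (p : Finset (L.DefinableSet A ε) → Prop)
    [DecidablePred p] :
    A.Definable L {s | p (atomIndex x s)} ∧ m.toFun {s | p (atomIndex x s)} =
      ∑ k ∈ x.support.powerset with p k, m.toFun (atomIndex x ⁻¹' {k}) := by
  rw [← atomIndex_preimage_powerset_filter]
  exact m.apply_preimage_finset (definable_atomIndex_preimage_singleton x) _

theorem KeislerMeasure.sum_apply_atomIndex_preimage :
    ∑ k ∈ x.support.powerset, m.toFun (atomIndex x ⁻¹' {k}) = 1 := by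
  simpa [m.measure_univ] using (m.apply_setOf_atomIndex x fun _ => True).2.symm

theorem KeislerMeasure.integral_eq_sum_atomIndex :
    m.integral x = ∑ k ∈ x.support.powerset, m.toFun (atomIndex x ⁻¹' {k}) * ∑ S ∈ k, x S := by
  classical
  have hS : ∀ S ∈ x.support,
      m.toFun S = ∑ k ∈ x.support.powerset with S ∈ k, m.toFun (atomIndex x ⁻¹' {k}) := by
    intro S hS
    rw [← (m.apply_setOf_atomIndex x _).2]
    congr 1
    ext s
    simp [atomIndex, hS]
  calc m.integral x
      = ∑ S ∈ x.support, ∑ k ∈ x.support.powerset with S ∈ k,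
          x S * m.toFun (atomIndex x ⁻¹' {k}) := by
        rw [KeislerMeasure.integral, Finsupp.linearCombination_apply, Finsupp.sum]
        exact Finset.sum_congr rfl fun S hS' => by rw [smul_eq_mul, hS S hS', Finset.mul_sum]
    _ = ∑ k ∈ x.support.powerset, ∑ S ∈ k, x S * m.toFun (atomIndex x ⁻¹' {k}) :=
        Finset.sum_comm' fun S k => by
          simp only [Finset.mem_filter, Finset.mem_powerset]
          exact ⟨fun ⟨_, hk, hS⟩ => ⟨hS, hk⟩, fun ⟨hS, hk⟩ => ⟨hk hS, hk, hS⟩⟩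
    _ = _ := by simp_rw [Finset.mul_sum, mul_comm]

end IndicatorCombination

section Amalgamation

open FirstOrder.Language

variable {L : FirstOrder.Language} {M : Type*} [L.Structure M] {A₁ A₂ : Set M}
  {ε₁ ε₂ δ : Type*} (m₁ : KeislerMeasure L M A₁ ε₁) (m₂ : KeislerMeasure L M A₂ ε₂)

theorem KeislerMeasure.integral_le_integral_of_forall_le {j₁ : ε₁ → δ} {j₂ : ε₂ → δ}
    (hm : ∀ S R, A₁.Definable L S → A₂.Definable L R → cyl j₁ S ⊆ cyl j₂ R →
      m₁.toFun S ≤ m₂.toFun R)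
    {x : L.DefinableSet A₁ ε₁ →₀ ℝ} {y : L.DefinableSet A₂ ε₂ →₀ ℝ}
    (hxy : ∀ t : δ → M, indicatorCombination x (t ∘ j₁) ≤ indicatorCombination y (t ∘ j₂)) :
    m₁.integral x ≤ m₂.integral y := by
  classical
  rw [m₁.integral_eq_sum_atomIndex, m₂.integral_eq_sum_atomIndex]
  refine sum_mul_le_sum_mul_of_forall_sum_filter_le _ _ _ _ _ _
    (by rw [m₁.sum_apply_atomIndex_preimage, m₂.sum_apply_atomIndex_preimage]) fun r => ?_
  obtain ⟨hU, hmU⟩ := m₁.apply_setOf_atomIndex x fun k => r ≤ ∑ S ∈ k, x S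
  obtain ⟨hW, hmW⟩ := m₂.apply_setOf_atomIndex y fun k => r ≤ ∑ S ∈ k, y S
  rw [← hmU, ← hmW]
  refine hm _ _ hU hW fun t ht => ?_
  have h := hxy t
  rw [indicatorCombination_apply, indicatorCombination_apply] at h
  exact ht.trans h

theorem KeislerMeasure.integral_add_integral_le {j₁ : ε₁ → δ} {j₂ : ε₂ → δ}
    (hm : ∀ S R, A₁.Definable L S → A₂.Definable L R → cyl j₁ S ⊆ cyl j₂ R →
      m₁.toFun S ≤ m₂.toFun R)
    {x : L.DefinableSet A₁ ε₁ →₀ ℝ} {y : L.DefinableSet A₂ ε₂ →₀ ℝ} {c : ℝ}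
    (hc : ∀ t : δ → M, indicatorCombination x (t ∘ j₁) + indicatorCombination y (t ∘ j₂) ≤ c) :
    m₁.integral x + m₂.integral y ≤ c := by
  have h := m₁.integral_le_integral_of_forall_le m₂ hm
    (x := x) (y := c • Finsupp.single ⊤ 1 - y) fun t => by
      rw [map_sub, map_smul, indicatorCombination_single, Pi.sub_apply, Pi.smul_apply,
        DefinableSet.coe_top, Set.indicator_univ, Pi.one_apply, smul_eq_mul, mul_one]
      linarith [hc t]
  rw [map_sub, map_smul, m₂.integral_single, DefinableSet.coe_top, m₂.measure_univ, smul_eq_mul,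
    mul_one] at h
  linarith

theorem KeislerMeasure.exists_amalgam (j₁ : ε₁ → δ) (j₂ : ε₂ → δ)
    (hm : ∀ S R, A₁.Definable L S → A₂.Definable L R → cyl j₁ S ⊆ cyl j₂ R →
      m₁.toFun S ≤ m₂.toFun R) :
    ∃ ω : KeislerMeasure L M Set.univ δ,
      (∀ S, A₁.Definable L S → ω.toFun (cyl j₁ S) = m₁.toFun S) ∧
      ∀ R, A₂.Definable L R → ω.toFun (cyl j₂ R) = m₂.toFun R := by
  have : Nonempty (δ → M) := by
    by_contra h
    have h' := hm Set.univ ∅ Set.definable_univ Set.definable_empty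
      fun t _ => (not_nonempty_iff.1 h).elim t
    rw [m₁.measure_univ, m₂.apply_empty] at h'
    exact absurd h' (by norm_num)
  let ev : (L.DefinableSet A₁ ε₁ →₀ ℝ) × (L.DefinableSet A₂ ε₂ →₀ ℝ) →ₗ[ℝ] (δ → M) → ℝ :=
    (LinearMap.funLeft ℝ ℝ (· ∘ j₁) ∘ₗ indicatorCombination).coprod
      (LinearMap.funLeft ℝ ℝ (· ∘ j₂) ∘ₗ indicatorCombination)
  have hev : ∀ x y t, ev (x, y) t =
      indicatorCombination x (t ∘ j₁) + indicatorCombination y (t ∘ j₂) := fun _ _ _ => rfl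
  have hbdd : ∀ z, ev z ∈ boundedFunctions (δ → M) := fun ⟨x, y⟩ =>
    ⟨_, fun t => (hev x y t ▸ abs_add_le _ _).trans
      (add_le_add (abs_indicatorCombination_le x _) (abs_indicatorCombination_le y _))⟩
  obtain ⟨ω, hω_nonneg, hω_add, hω_ev⟩ :=
    exists_content_of_le_iSup ev hbdd (m₁.integral.coprod m₂.integral) fun ⟨x, y⟩ =>
      m₁.integral_add_integral_le m₂ hm fun t =>
        le_ciSup (bddAbove_range_of_mem_boundedFunctions (hbdd (x, y))) t
  have h₁ : ∀ S, A₁.Definable L S → ω (cyl j₁ S) = m₁.toFun S := fun S hS => by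
    rw [hω_ev (Finsupp.single (⟨S, hS⟩ : L.DefinableSet A₁ ε₁) 1, 0)]
    · exact (add_zero _).trans (m₁.integral_single _)
    · ext t
      rw [hev, map_zero, Pi.zero_apply, add_zero,
        indicatorCombination_single (⟨S, hS⟩ : L.DefinableSet A₁ ε₁)]
      rfl
  have h₂ : ∀ R, A₂.Definable L R → ω (cyl j₂ R) = m₂.toFun R := fun R hR => by
    rw [hω_ev (0, Finsupp.single (⟨R, hR⟩ : L.DefinableSet A₂ ε₂) 1)]
    · exact (zero_add _).trans (m₂.integral_single _)
    · ext t
      rw [hev, map_zero, Pi.zero_apply, zero_add,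
        indicatorCombination_single (⟨R, hR⟩ : L.DefinableSet A₂ ε₂)]
      rfl
  refine ⟨KeislerMeasure.ofContent ω ?_ ?_ hω_nonneg hω_add, h₁, h₂⟩
  · exact (h₁ Set.univ Set.definable_univ).trans m₁.measure_univ
  · simpa using hω_ev 0 ∅ (by rw [map_zero, Set.indicator_empty]; rfl)

end Amalgamation

section ExtensionDomination

variable {L : FirstOrder.Language} {M : Type*} [L.Structure M] {A : Set M}

theorem KeislerMeasure.exists_extension {ε δ : Type*} (Λ : KeislerMeasure L M A δ) (j : ε ↪ δ)
    (ω : KeislerMeasure L M Set.univ ε)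
    (h : ∀ X, A.Definable L X → Λ.toFun (cyl j X) = ω.toFun X) :
    ∃ Ω : KeislerMeasure L M Set.univ δ, (∀ S, A.Definable L S → Ω.toFun S = Λ.toFun S) ∧
      ∀ X, (Set.univ : Set M).Definable L X → Ω.toFun (cyl j X) = ω.toFun X := by
  have := Λ.nonempty
  refine Λ.exists_amalgam ω id j fun S X hS hX hSX => ?_
  have hP := hS.image_comp_embedding_of_nonempty j
  calc Λ.toFun S ≤ Λ.toFun (cyl j ((fun g : δ → M => g ∘ j) '' S)) :=
        Λ.mono hS (hP.cyl j) fun t ht => ⟨t, ht, rfl⟩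
    _ = ω.toFun ((fun g : δ → M => g ∘ j) '' S) := h _ hP
    _ ≤ ω.toFun X := ω.mono (hP.mono (Set.subset_univ A)) hX (by
        rintro _ ⟨t, ht, rfl⟩
        exact hSX ht)

theorem KeislerMeasure.apply_cyl_inr_eq_of_forall_mem_extSpace {α β : Type*}
    (lam : KeislerMeasure L M A (α ⊕ β)) (mu : KeislerMeasure L M Set.univ α)
    (nu : KeislerMeasure L M Set.univ β)
    (hmu : ∀ X, A.Definable L X → lam.toFun (cyl Sum.inl X) = mu.toFun X)
    (hnu : ∀ om ∈ extSpace L A lam mu, ∀ Y, (Set.univ : Set M).Definable L Y →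
      om.toFun (cyl Sum.inr Y) = nu.toFun Y)
    {Y : Set (β → M)} (hY : A.Definable L Y) : lam.toFun (cyl Sum.inr Y) = nu.toFun Y := by
  obtain ⟨ω, hωA, hωμ⟩ := lam.exists_extension Function.Embedding.inl mu hmu
  rw [← hωA _ (hY.cyl _)]
  exact hnu ω ⟨hωA, hωμ⟩ Y (hY.mono (Set.subset_univ A))

theorem KeislerMeasure.exists_amalgam_of_marginal_eq {α β γ : Type*}
    (lam₁ : KeislerMeasure L M A (α ⊕ β)) (lam₂ : KeislerMeasure L M A (β ⊕ γ))
    (h : ∀ Q, A.Definable L Q → lam₁.toFun (cyl Sum.inr Q) = lam₂.toFun (cyl Sum.inl Q)) :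
    ∃ Ω : KeislerMeasure L M Set.univ ((α ⊕ β) ⊕ γ),
      (∀ S, A.Definable L S → Ω.toFun (cyl Sum.inl S) = lam₁.toFun S) ∧
      ∀ R, A.Definable L R → Ω.toFun (cyl (Sum.map Sum.inr id) R) = lam₂.toFun R := by
  have := lam₁.nonempty
  refine lam₁.exists_amalgam lam₂ _ _ fun S R hS hR hSR => ?_
  have hP := hS.image_comp_embedding_of_nonempty (Function.Embedding.inr : β ↪ α ⊕ β)
  calc lam₁.toFun S ≤ lam₁.toFun (cyl Sum.inr ((fun g : α ⊕ β → M => g ∘ Sum.inr) '' S)) :=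
        lam₁.mono hS (hP.cyl _) fun t ht => ⟨t, ht, rfl⟩
    _ = lam₂.toFun (cyl Sum.inl ((fun g : α ⊕ β → M => g ∘ Sum.inr) '' S)) := h _ hP
    _ ≤ lam₂.toFun R := lam₂.mono (hP.cyl _) hR ?_
  rintro u ⟨g, hg, hgu⟩
  have hu : (fun c => Sum.elim g (u ∘ Sum.inr) (Sum.map Sum.inr id c)) = u := by
    funext c
    rcases c with b | c
    · exact congrFun hgu b
    · rfl
  have h' : (fun c => Sum.elim g (u ∘ Sum.inr) (Sum.map Sum.inr id c)) ∈ R := hSR hg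
  rwa [hu] at h'

end ExtensionDomination

/-- Transitivity of extension domination over a fixed parameter set:
if `μ ≥_{E,A} ν` and `ν ≥_{E,A} η`, then `μ ≥_{E,A} η`. -/
theorem extDom_trans {L : FirstOrder.Language} {M : Type*} [L.Structure M]
    (A : Set M) {α β γ : Type*}
    (mu : KeislerMeasure L M (Set.univ : Set M) α)
    (nu : KeislerMeasure L M (Set.univ : Set M) β)
    (eta : KeislerMeasure L M (Set.univ : Set M) γ)
    (h₁ : ExtDomOver L A mu nu) (h₂ : ExtDomOver L A nu eta) :
    ExtDomOver L A mu eta := by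
  obtain ⟨lam₁, hlam₁, hE₁⟩ := h₁
  obtain ⟨lam₂, hlam₂, hE₂⟩ := h₂
  obtain ⟨Ω₀, hΩ₀₁, hΩ₀₂⟩ := lam₁.exists_amalgam_of_marginal_eq lam₂ fun Q hQ =>
    (lam₁.apply_cyl_inr_eq_of_forall_mem_extSpace mu nu hlam₁ hE₁ hQ).trans (hlam₂ Q hQ).symm
  let jac : α ⊕ γ ↪ (α ⊕ β) ⊕ γ := Function.Embedding.inl.sumMap (Function.Embedding.refl γ)
  let Λ := Ω₀.restrict (Set.subset_univ A)
  refine ⟨Λ.comap jac, fun X hX => (hΩ₀₁ _ (hX.cyl _)).trans (hlam₁ X hX), fun ω hω Y hY => ?_⟩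
  obtain ⟨Ω, hΩA, hΩω⟩ := Λ.exists_extension jac ω fun X hX => (hω.1 X hX).symm
  have hΩν : ∀ Q, (Set.univ : Set M).Definable L Q →
      Ω.toFun (cyl Sum.inl (cyl Sum.inr Q)) = nu.toFun Q :=
    hE₁ (Ω.comap Sum.inl) ⟨fun s hs => (hΩA _ (hs.cyl _)).trans (hΩ₀₁ s hs),
      fun X hX => (hΩω _ (hX.cyl _)).trans (hω.2 X hX)⟩
  calc ω.toFun (cyl Sum.inr Y) = Ω.toFun (cyl jac (cyl Sum.inr Y)) := (hΩω _ (hY.cyl _)).symm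
    _ = eta.toFun Y := hE₂ (Ω.comap (Sum.map Sum.inr id))
        ⟨fun s hs => (hΩA _ (hs.cyl _)).trans (hΩ₀₂ s hs), hΩν⟩ Y hY
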